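/- arXiv:2404.18698 — 4 statements merged into one kernel-verified Lean document; each statement's English description precedes it below -/
import Mathlib

section
/- Let R be a ring, σ an automorphism of R, δ a σ-derivation, S = R[x; σ, δ], and M a right R-module. If M has enough prime submodules, then every nonzero S-submodule N of M ⊗_R S contains a good polynomial m whose leading coefficient m_k generates a prime R-submodule m_k R of M. -/
open MulOpposite

/-- `δ` is a `σ`-derivation of the ring `R`. -/
def IsSigmaDeriv {R : Type} [Ring R] (σ : R ≃+* R) (δ : R → R) : Prop :=
  (∀ a b, δ (a + b) = δ a + δ b) ∧ ∀ a b, δ (a * b) = σ a * δ b + δ a * b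

/-- A presentation of the skew polynomial ring `S = R[x; σ, δ]`: `S` is a ring containing an
image of `R` via `ι`, with an element `x` satisfying `x·r = σ(r)·x + δ(r)`, and `S` is free
as a left `R`-module with basis the powers of `x`. -/
structure SkewPoly (R S : Type) [Ring R] [Ring S] (σ : R ≃+* R) (δ : R → R) : Type where
  ι : R →+* S
  x : S
  comm : ∀ r : R, x * ι r = ι (σ r) * x + ι (δ r)
  basis : Function.Bijective fun c : ℕ →₀ R => c.sum fun i a => ι a * x ^ i

/-- A presentation of the induced right `S`-module `M ⊗_R S` of a right `R`-module `M`
(right modules are encoded as modules over the opposite ring): `N` is a right `S`-module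
containing `M` via `j`, compatibly with the right `R`-actions, and every element of `N` is
uniquely a polynomial `∑ (j mᵢ)·xⁱ` with coefficients in `M`. -/
structure Induced (R S M N : Type) [Ring R] [Ring S] [AddCommGroup M] [Module Rᵐᵒᵖ M]
    [AddCommGroup N] [Module Sᵐᵒᵖ N] {σ : R ≃+* R} {δ : R → R}
    (sp : SkewPoly R S σ δ) : Type where
  j : M →+ N
  j_smul : ∀ (r : R) (m : M), j (op r • m) = op (sp.ι r) • j m
  free : Function.Bijective fun c : ℕ →₀ M => c.sum fun i m => op (sp.x ^ i) • j m

variable {R S M N : Type} [Ring R] [Ring S] [AddCommGroup M] [Module Rᵐᵒᵖ M]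
  [AddCommGroup N] [Module Sᵐᵒᵖ N] {σ : R ≃+* R} {δ : R → R}

/-- The polynomial `∑ (j mᵢ)·xⁱ` in `M ⊗_R S` with coefficient family `c`. -/
def pol (sp : SkewPoly R S σ δ) (im : Induced R S M N sp) (c : ℕ →₀ M) : N :=
  c.sum fun i m => op (sp.x ^ i) • im.j m

/-- `ν ∈ M ⊗_R S` has degree exactly `k`. -/
def DegEq (sp : SkewPoly R S σ δ) (im : Induced R S M N sp) (ν : N) (k : ℕ) : Prop :=
  ∃ c : ℕ →₀ M, pol sp im c = ν ∧ c k ≠ 0 ∧ ∀ i, k < i → c i = 0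

/-- `ν` is a good polynomial of degree `k`: whenever `ν·r ≠ 0` for `r ∈ R`,
`deg (ν·r) = deg ν = k`. -/
def GoodAt (sp : SkewPoly R S σ δ) (im : Induced R S M N sp) (ν : N) (k : ℕ) : Prop :=
  DegEq sp im ν k ∧ ∀ r : R, op (sp.ι r) • ν ≠ 0 → DegEq sp im (op (sp.ι r) • ν) k

/-- `ν` is a good polynomial. -/
def Good (sp : SkewPoly R S σ δ) (im : Induced R S M N sp) (ν : N) : Prop :=
  ∃ k, GoodAt sp im ν k

/-- A submodule `P` of a module `V` over `T` is prime: `P ≠ 0` and every nonzero submodule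
of `P` has the same annihilator as `P`. -/
def IsPrimeSub {T V : Type} [Ring T] [AddCommGroup V] [Module T V] (P : Submodule T V) :
    Prop :=
  P ≠ ⊥ ∧ ∀ P' : Submodule T V, P' ≤ P → P' ≠ ⊥ →
    {t : T | ∀ v ∈ P', t • v = 0} = {t : T | ∀ v ∈ P, t • v = 0}

/-- `pol` as an additive homomorphism. -/
def polHom (sp : SkewPoly R S σ δ) (im : Induced R S M N sp) : (ℕ →₀ M) →+ N where
  toFun := pol sp im
  map_zero' := Finsupp.sum_zero_index
  map_add' c c' := by
    show pol sp im (c + c') = pol sp im c + pol sp im c'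
    unfold pol
    exact Finsupp.sum_add_index' (fun i => by rw [map_zero, smul_zero])
      (fun i m m' => by rw [map_add, smul_add])

lemma pol_zero (sp : SkewPoly R S σ δ) (im : Induced R S M N sp) : pol sp im 0 = 0 :=
  Finsupp.sum_zero_index

lemma pol_single (sp : SkewPoly R S σ δ) (im : Induced R S M N sp) (i : ℕ) (m : M) :
    pol sp im (Finsupp.single i m) = op (sp.x ^ i) • im.j m := by
  unfold pol
  rw [Finsupp.sum_single_index (by rw [map_zero, smul_zero])]

lemma pol_bij (sp : SkewPoly R S σ δ) (im : Induced R S M N sp) :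
    Function.Bijective (pol sp im) := im.free

/-- Key expansion lemma: `x^i · ι r` is a left `R`-combination of `x^t`, `t ≤ i`, with
leading coefficient `σ^[i] r`. -/
lemma lemA (sp : SkewPoly R S σ δ) (i : ℕ) (r : R) :
    ∃ a : ℕ → R, (sp.x ^ i * sp.ι r = ∑ t ∈ Finset.range (i + 1), sp.ι (a t) * sp.x ^ t)
      ∧ a i = (⇑σ)^[i] r ∧ ∀ t, i < t → a t = 0 := by
  induction i generalizing r with
  | zero =>
    exact ⟨fun t => if t = 0 then r else 0, by simp, by simp,
      fun t ht => if_neg (by omega)⟩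
  | succ i ih =>
    obtain ⟨a, ha, hai, ha0⟩ := ih (σ r)
    obtain ⟨b, hb, _, hb0⟩ := ih (δ r)
    have hA : ∑ t ∈ Finset.range (i + 2), sp.ι (if 1 ≤ t then a (t - 1) else 0) * sp.x ^ t
        = (∑ t ∈ Finset.range (i + 1), sp.ι (a t) * sp.x ^ t) * sp.x := by
      rw [Finset.sum_range_succ', Finset.sum_mul]
      simp [pow_succ, mul_assoc]
    have hB : ∑ t ∈ Finset.range (i + 2), sp.ι (if t ≤ i then b t else 0) * sp.x ^ t
        = ∑ t ∈ Finset.range (i + 1), sp.ι (b t) * sp.x ^ t := by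
      rw [Finset.sum_range_succ]
      have h1 : ¬ (i + 1 ≤ i) := by omega
      rw [if_neg h1, map_zero, zero_mul, add_zero]
      refine Finset.sum_congr rfl fun t ht => ?_
      rw [if_pos (by have := Finset.mem_range.mp ht; omega)]
    refine ⟨fun t => (if 1 ≤ t then a (t - 1) else 0) + (if t ≤ i then b t else 0), ?_, ?_, ?_⟩
    · have h1 : sp.x ^ (i + 1) * sp.ι r
          = sp.x ^ i * sp.ι (σ r) * sp.x + sp.x ^ i * sp.ι (δ r) := by
        rw [pow_succ, mul_assoc, sp.comm r, mul_add, ← mul_assoc]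
      rw [h1, ha, hb, ← hA, ← hB, ← Finset.sum_add_distrib]
      exact Finset.sum_congr rfl fun t _ => by rw [map_add, add_mul]
    · have h1 : ¬ (i + 1 ≤ i) := by omega
      simp only [Nat.le_add_left, if_true, Nat.add_sub_cancel, h1, if_false, add_zero]
      rw [hai, Function.iterate_succ_apply]
    · intro t ht
      have h1 : i < t - 1 := by omega
      have h2 : ¬ (t ≤ i) := by omega
      simp [h2, ha0 _ h1]

/-- Key lemma: if `pol c` has degree `≤ k` then `(pol c)·r` has degree `≤ k`, with
`k`-th coefficient `(c k)·σ^k(r)`. -/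
lemma lemB (sp : SkewPoly R S σ δ) (im : Induced R S M N sp)
    (c : ℕ →₀ M) (r : R) (k : ℕ) (hc : ∀ i, k < i → c i = 0) :
    ∃ d : ℕ →₀ M, pol sp im d = op (sp.ι r) • pol sp im c ∧ (∀ i, k < i → d i = 0)
      ∧ d k = op ((⇑σ)^[k] r) • c k := by
  classical
  choose a ha hlead hvan using fun i => lemA sp i r
  -- coefficient function of the product
  set d0 : ℕ → M := fun t => ∑ i ∈ c.support, op (a i t) • c i with hd0
  set d : ℕ →₀ M := ∑ t ∈ Finset.range (k + 1), Finsupp.single t (d0 t) with hd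
  have hsupp_le : ∀ i ∈ c.support, i ≤ k := fun i hi => by
    by_contra h
    exact (Finsupp.mem_support_iff.mp hi) (hc i (by omega))
  refine ⟨d, ?_, ?_, ?_⟩
  · -- pol d = op (ι r) • pol c
    have hpd : pol sp im d = ∑ t ∈ Finset.range (k + 1), op (sp.x ^ t) • im.j (d0 t) := by
      rw [hd, show pol sp im = ⇑(polHom sp im) from rfl, map_sum]
      exact Finset.sum_congr rfl fun t _ => pol_single sp im t (d0 t)
    rw [hpd]
    have hrhs : op (sp.ι r) • pol sp im c
        = ∑ i ∈ c.support, op (sp.x ^ i * sp.ι r) • im.j (c i) := by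
      unfold pol
      rw [Finsupp.sum, Finset.smul_sum]
      exact Finset.sum_congr rfl fun i _ => by rw [smul_smul, ← op_mul]
    rw [hrhs]
    have hterm : ∀ i ∈ c.support, op (sp.x ^ i * sp.ι r) • im.j (c i)
        = ∑ t ∈ Finset.range (k + 1), op (sp.x ^ t) • im.j (op (a i t) • c i) := by
      intro i hi
      rw [ha i]
      have h1 : op ((∑ t ∈ Finset.range (i + 1), sp.ι (a i t) * sp.x ^ t)) • im.j (c i)
          = ∑ t ∈ Finset.range (i + 1), op (sp.ι (a i t) * sp.x ^ t) • im.j (c i) := by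
        rw [← Finset.sum_smul]
        congr 1
        exact (map_sum (opAddEquiv : S ≃+ Sᵐᵒᵖ).toAddMonoidHom _ _)
      rw [h1]
      have h2 : ∀ t, op (sp.ι (a i t) * sp.x ^ t) • im.j (c i)
          = op (sp.x ^ t) • im.j (op (a i t) • c i) := fun t => by
        rw [im.j_smul, smul_smul, ← op_mul]
      have h3 : Finset.range (i + 1) ⊆ Finset.range (k + 1) := by
        intro t ht
        have hik := hsupp_le i hi
        simp only [Finset.mem_range] at *
        omega
      rw [Finset.sum_congr rfl fun t _ => h2 t]
      refine Finset.sum_subset h3 fun t _ htn => ?_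
      have : i < t := by simp only [Finset.mem_range] at htn; omega
      rw [hvan i t this]
      simp
    rw [Finset.sum_congr rfl hterm, Finset.sum_comm]
    refine Finset.sum_congr rfl fun t _ => ?_
    rw [hd0]
    rw [← Finset.smul_sum, map_sum im.j]
  · intro i hik
    rw [hd]
    rw [Finsupp.finset_sum_apply]
    refine Finset.sum_eq_zero fun t ht => ?_
    have : t ≠ i := by
      have := Finset.mem_range.mp ht; omega
    rw [Finsupp.single_apply_eq_zero.mpr fun h => absurd h.symm (by omega)]
  · rw [hd, Finsupp.finset_sum_apply]
    have hk : k ∈ Finset.range (k + 1) := Finset.self_mem_range_succ k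
    rw [Finset.sum_eq_single k (fun t _ htk => Finsupp.single_eq_of_ne' htk)
      (fun h => absurd hk h)]
    rw [Finsupp.single_eq_same]
    show (∑ i ∈ c.support, op (a i k) • c i) = op ((⇑σ)^[k] r) • c k
    by_cases hks : k ∈ c.support
    · rw [Finset.sum_eq_single k (fun i hi hik => ?_) (fun h => absurd hks h)]
      · rw [hlead k]
      · have : k < i → c i = 0 := hc i
        have hik' : i ≤ k := hsupp_le i hi
        rw [hvan i k (by omega)]
        simp
    · have hck : c k = 0 := Finsupp.notMem_support_iff.mp hks
      rw [hck, smul_zero]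
      refine Finset.sum_eq_zero fun i hi => ?_
      have hik : i ≤ k := hsupp_le i hi
      have : i ≠ k := fun h => hks (h ▸ hi)
      rw [hvan i k (by omega)]
      simp

/-- Any nonzero element of `N` has an exact degree. -/
lemma degEq_exists (sp : SkewPoly R S σ δ) (im : Induced R S M N sp) (ν : N) (hν : ν ≠ 0) :
    ∃ k, DegEq sp im ν k := by
  obtain ⟨c, hc⟩ := (pol_bij sp im).surjective ν
  have hc0 : c ≠ 0 := fun h => hν (by rw [← hc, h, pol_zero])
  have hsupp : c.support.Nonempty := Finsupp.support_nonempty_iff.mpr hc0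
  refine ⟨c.support.max' hsupp, c, hc, ?_, ?_⟩
  · exact Finsupp.mem_support_iff.mp (c.support.max'_mem hsupp)
  · intro i hi
    by_contra h
    exact absurd (Finset.le_max' _ i (Finsupp.mem_support_iff.mpr h)) (by omega)

/-- if `M` has enough prime submodules, then every nonzero `S`-submodule of
`M ⊗_R S` contains a good polynomial whose leading coefficient `m_k` generates a prime
`R`-submodule `m_k·R` of `M`. -/
theorem stmt15 (sp : SkewPoly R S σ δ) (im : Induced R S M N sp) (hδ : IsSigmaDeriv σ δ)
    (henough : ∀ Q : Submodule Rᵐᵒᵖ M, Q ≠ ⊥ → ∃ P : Submodule Rᵐᵒᵖ M, P ≤ Q ∧ IsPrimeSub P) :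
    ∀ W : Submodule Sᵐᵒᵖ N, W ≠ ⊥ →
      ∃ ν ∈ W, ∃ (k : ℕ) (c : ℕ →₀ M),
        pol sp im c = ν ∧ c k ≠ 0 ∧ (∀ i, k < i → c i = 0) ∧ GoodAt sp im ν k ∧
        IsPrimeSub (Submodule.span Rᵐᵒᵖ ({c k} : Set M)) := by
  classical
  intro W hW
  obtain ⟨ν0, hν0W, hν0⟩ := (Submodule.ne_bot_iff W).mp hW
  have hD : ∃ k, ∃ ν ∈ W, DegEq sp im ν k := by
    obtain ⟨k, hk⟩ := degEq_exists sp im ν0 hν0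
    exact ⟨k, ν0, hν0W, hk⟩
  set k := Nat.find hD with hkdef
  obtain ⟨ν1, hν1W, hν1⟩ := Nat.find_spec hD
  have hmin : ∀ k', (∃ ν ∈ W, DegEq sp im ν k') → k ≤ k' := fun k' h => Nat.find_min' hD h
  -- the submodule of `k`-th coefficients of degree-`≤ k` elements of `W`
  let L : Submodule Rᵐᵒᵖ M :=
    { carrier := {m | ∃ ν ∈ W, ∃ c : ℕ →₀ M, pol sp im c = ν ∧ c k = m ∧ ∀ i, k < i → c i = 0}
      zero_mem' := ⟨0, W.zero_mem, 0, pol_zero sp im, rfl, fun i _ => rfl⟩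
      add_mem' := by
        rintro m m' ⟨ν, hν, c, hpc, hck, hc0⟩ ⟨ν', hν', c', hpc', hck', hc0'⟩
        refine ⟨ν + ν', W.add_mem hν hν', c + c', ?_, ?_, ?_⟩
        · rw [show pol sp im = ⇑(polHom sp im) from rfl, map_add]
          rw [show ⇑(polHom sp im) = pol sp im from rfl, hpc, hpc']
        · rw [Finsupp.add_apply, hck, hck']
        · intro i hi; rw [Finsupp.add_apply, hc0 i hi, hc0' i hi, add_zero]
      smul_mem' := by
        rintro r m ⟨ν, hν, c, hpc, hck, hc0⟩
        obtain ⟨d, hd1, hd2, hd3⟩ := lemB sp im c ((⇑σ.symm)^[k] r.unop) k hc0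
        refine ⟨op (sp.ι ((⇑σ.symm)^[k] r.unop)) • ν, W.smul_mem _ hν, d, ?_, ?_, hd2⟩
        · rw [hd1, hpc]
        · have h2 : (⇑σ)^[k] ((⇑σ.symm)^[k] r.unop) = r.unop :=
            (Function.LeftInverse.iterate σ.apply_symm_apply k) r.unop
          rw [hd3, hck, h2, op_unop] }
  have hmemL : ∀ m : M,
      (∃ ν ∈ W, ∃ c : ℕ →₀ M, pol sp im c = ν ∧ c k = m ∧ ∀ i, k < i → c i = 0) → m ∈ L :=
    fun m h => h
  have hLmem : ∀ m : M, m ∈ L →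
      ∃ ν ∈ W, ∃ c : ℕ →₀ M, pol sp im c = ν ∧ c k = m ∧ ∀ i, k < i → c i = 0 :=
    fun m h => h
  have hL : L ≠ ⊥ := by
    obtain ⟨c1, hpc1, hck1, hc01⟩ := hν1
    exact (Submodule.ne_bot_iff L).mpr
      ⟨c1 k, hmemL _ ⟨ν1, hν1W, c1, hpc1, rfl, hc01⟩, hck1⟩
  obtain ⟨P, hPL, hP⟩ := henough L hL
  obtain ⟨p, hpP, hp⟩ := (Submodule.ne_bot_iff P).mp hP.1
  obtain ⟨ν, hνW, c, hpc, hck, hc0⟩ := hLmem p (hPL hpP)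
  have hckne : c k ≠ 0 := by rw [hck]; exact hp
  refine ⟨ν, hνW, k, c, hpc, hckne, hc0, ⟨⟨c, hpc, hckne, hc0⟩, ?_⟩, ?_⟩
  · -- goodness of ν at degree k
    intro r hr
    obtain ⟨d, hd1, hd2, _⟩ := lemB sp im c r k hc0
    rw [hpc] at hd1
    have hdne : d ≠ 0 := by
      intro h; rw [h, pol_zero] at hd1; exact hr hd1.symm
    have hsupp : d.support.Nonempty := Finsupp.support_nonempty_iff.mpr hdne
    set k' := d.support.max' hsupp with hk'
    have hdeg : DegEq sp im (op (sp.ι r) • ν) k' := by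
      refine ⟨d, hd1, Finsupp.mem_support_iff.mp (d.support.max'_mem hsupp), fun i hi => ?_⟩
      by_contra h
      exact absurd (Finset.le_max' _ i (Finsupp.mem_support_iff.mpr h)) (by omega)
    have hk'le : k' ≤ k := by
      by_contra h
      exact Finsupp.mem_support_iff.mp (d.support.max'_mem hsupp) (hd2 k' (by omega))
    have hkle : k ≤ k' := hmin k' ⟨_, W.smul_mem _ hνW, hdeg⟩
    rwa [le_antisymm hk'le hkle] at hdeg
  · -- primeness of span {c k}
    rw [hck]
    have hsub : Submodule.span Rᵐᵒᵖ ({p} : Set M) ≤ P :=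
      Submodule.span_le.mpr (Set.singleton_subset_iff.mpr hpP)
    have hnb : Submodule.span Rᵐᵒᵖ ({p} : Set M) ≠ ⊥ :=
      (Submodule.ne_bot_iff _).mpr ⟨p, Submodule.mem_span_singleton_self p, hp⟩
    refine ⟨hnb, fun P' hP'le hP'ne => ?_⟩
    rw [hP.2 P' (hP'le.trans hsub) hP'ne, hP.2 _ hsub hnb]
end

section
/- Let R be a ring, σ an automorphism of R, δ a σ-derivation, S = R[x; σ, δ], and M a prime right R-module with P = ann_R(M). If P is (σ, σ^{-1}, δ)-stable (σ(P) = P and δ(P) ⊆ P), then the induced module M ⊗_R S is a prime right S-module and its annihilator (hence its unique associated prime) equals PS, the set of polynomials in S with all coefficients in P. -/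
open MulOpposite

variable {R S M N : Type} [Ring R] [Ring S] [AddCommGroup M] [Module Rᵐᵒᵖ M]
  [AddCommGroup N] [Module Sᵐᵒᵖ N] {σ : R ≃+* R} {δ : R → R}

namespace Stmt16Aux

lemma sderiv_zero (hδ : IsSigmaDeriv σ δ) : δ 0 = 0 := by
  have h := hδ.1 0 0
  rw [add_zero] at h
  exact (left_eq_add.mp h)

/-- Expansion of `x^i * ι r` as a left polynomial. -/
noncomputable def Dexp (σ : R ≃+* R) {δ : R → R} (hδ : IsSigmaDeriv σ δ) :
    ℕ → R → ℕ →₀ R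
  | 0, r => Finsupp.single 0 r
  | (i+1), r =>
      Finsupp.mapDomain (· + 1)
        (Finsupp.mapRange (⇑σ) (map_zero σ) (Dexp σ hδ i r))
        + Finsupp.mapRange δ (sderiv_zero hδ) (Dexp σ hδ i r)

variable (sp : SkewPoly R S σ δ) (hδ : IsSigmaDeriv σ δ)

lemma Dexp_spec (i : ℕ) (r : R) :
    sp.x ^ i * sp.ι r = (Dexp σ hδ i r).sum fun l a => sp.ι a * sp.x ^ l := by
  induction i with
  | zero =>
      simp [Dexp, Finsupp.sum_single_index]
  | succ i ih =>
      rw [pow_succ', mul_assoc, ih, Dexp]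
      rw [Finsupp.sum_add_index' (fun l => by simp) (fun l a b => by simp [map_add, add_mul])]
      rw [Finsupp.sum_mapDomain_index (fun l => by simp) (fun l a b => by simp [map_add, add_mul])]
      rw [Finsupp.sum_mapRange_index (fun l => by simp),
        Finsupp.sum_mapRange_index (fun l => by simp)]
      rw [Finsupp.sum, Finsupp.sum, Finsupp.sum, Finset.mul_sum, ← Finset.sum_add_distrib]
      refine Finset.sum_congr rfl fun l _ => ?_
      rw [← mul_assoc, sp.comm, add_mul, mul_assoc, ← pow_succ']

lemma Dexp_gt (i : ℕ) (r : R) (l : ℕ) (h : i < l) : Dexp σ hδ i r l = 0 := by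
  induction i generalizing l with
  | zero =>
      simp [Dexp, Finsupp.single_eq_of_ne' (show (0:ℕ) ≠ l by omega)]
  | succ i ih =>
      rw [Dexp, Finsupp.add_apply]
      obtain ⟨l, rfl⟩ : ∃ l', l = l' + 1 := ⟨l - 1, by omega⟩
      rw [Finsupp.mapDomain_apply (add_left_injective 1), Finsupp.mapRange_apply,
        Finsupp.mapRange_apply, ih l (by omega), ih (l+1) (by omega), map_zero,
        sderiv_zero hδ, add_zero]

lemma Dexp_self (i : ℕ) (r : R) : Dexp σ hδ i r i = (⇑σ)^[i] r := by
  induction i with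
  | zero => simp [Dexp]
  | succ i ih =>
      rw [Dexp, Finsupp.add_apply, Finsupp.mapDomain_apply (add_left_injective 1),
        Finsupp.mapRange_apply, Finsupp.mapRange_apply, ih, Dexp_gt hδ i r (i+1) (by omega),
        sderiv_zero hδ, add_zero, Function.iterate_succ_apply']

lemma Dexp_mem (P : Set R) (h0 : (0:R) ∈ P) (hadd : ∀ a ∈ P, ∀ b ∈ P, a + b ∈ P)
    (hσ : ∀ a ∈ P, σ a ∈ P) (hδP : ∀ a ∈ P, δ a ∈ P)
    (i : ℕ) (r : R) (hr : r ∈ P) (l : ℕ) : Dexp σ hδ i r l ∈ P := by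
  induction i generalizing l with
  | zero =>
      rcases eq_or_ne l 0 with rfl | hl
      · simpa [Dexp] using hr
      · simpa [Dexp, Finsupp.single_eq_of_ne' (Ne.symm hl)] using h0
  | succ i ih =>
      rw [Dexp, Finsupp.add_apply, Finsupp.mapRange_apply]
      refine hadd _ ?_ _ (hδP _ (ih l))
      rcases eq_or_ne l 0 with rfl | hl
      · rw [Finsupp.mapDomain_notin_range]
        · exact h0
        · rintro ⟨a, ha⟩; exact Nat.succ_ne_zero a ha
      · obtain ⟨l, rfl⟩ : ∃ l', l = l' + 1 := ⟨l - 1, by omega⟩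
        rw [Finsupp.mapDomain_apply (add_left_injective 1), Finsupp.mapRange_apply]
        exact hσ _ (ih l)

variable (im : Induced R S M N sp)

lemma pol_zero : pol sp im 0 = 0 := Finsupp.sum_zero_index

lemma pol_add (c c' : ℕ →₀ M) : pol sp im (c + c') = pol sp im c + pol sp im c' :=
  Finsupp.sum_add_index' (fun i => by simp) (fun i a b => by rw [map_add, smul_add])

/-- `pol` as an additive monoid hom. -/
noncomputable def polHom : (ℕ →₀ M) →+ N where
  toFun := pol sp im
  map_zero' := pol_zero sp im
  map_add' := pol_add sp im

lemma pol_inj : Function.Injective (pol sp im) := im.free.1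

lemma pol_surj : Function.Surjective (pol sp im) := im.free.2

lemma pol_single (i : ℕ) (m : M) :
    pol sp im (Finsupp.single i m) = op (sp.x ^ i) • im.j m :=
  Finsupp.sum_single_index (by simp)

lemma pol_single_zero (m : M) : pol sp im (Finsupp.single 0 m) = im.j m := by
  rw [pol_single, pow_zero, op_one, one_smul]

lemma smul_op_single (a : R) (l : ℕ) (m : M) :
    op (sp.ι a * sp.x ^ l) • im.j m = op (sp.x ^ l) • im.j (op a • m) := by
  rw [op_mul, mul_smul, ← im.j_smul]

lemma smul_xpow (t : ℕ) (c : ℕ →₀ M) :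
    op (sp.x ^ t) • pol sp im c = pol sp im (Finsupp.mapDomain (· + t) c) := by
  rw [pol, pol, Finsupp.sum_mapDomain_index (fun l => by simp)
    (fun l a b => by rw [map_add, smul_add]), Finsupp.sum, Finsupp.sum, Finset.smul_sum]
  refine Finset.sum_congr rfl fun l _ => ?_
  rw [← mul_smul, ← op_mul, ← pow_add]

/-- Coefficients of `(j m)·x^i·ι b`. -/
noncomputable def Cexp (i : ℕ) (b : R) (m : M) : ℕ →₀ M :=
  Finsupp.mapRange (fun a => op a • m) (by simp) (Dexp σ hδ i b)

lemma Cexp_apply (i : ℕ) (b : R) (m : M) (l : ℕ) :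
    Cexp hδ i b m l = op (Dexp σ hδ i b l) • m := Finsupp.mapRange_apply

lemma Cexp_zero (i : ℕ) (b : R) : Cexp hδ i b (0 : M) = 0 := by
  ext l; simp [Cexp_apply]

lemma smul_Cexp (i : ℕ) (b : R) (m : M) :
    op (sp.x ^ i * sp.ι b) • im.j m = pol sp im (Cexp hδ i b m) := by
  rw [pol, Cexp, Finsupp.sum_mapRange_index (fun l => by simp)]
  calc op (sp.x ^ i * sp.ι b) • im.j m
      = op ((Dexp σ hδ i b).sum fun l a => sp.ι a * sp.x ^ l) • im.j m := by
        rw [← Dexp_spec sp hδ]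
    _ = _ := by
        rw [Finsupp.sum, Finsupp.sum, Finset.op_sum, Finset.sum_smul]
        exact Finset.sum_congr rfl fun l _ => smul_op_single sp im _ _ _

/-- Coefficients of `(pol c)·(ι b · x^t)`. -/
noncomputable def Psi (c : ℕ →₀ M) (b : R) (t : ℕ) : ℕ →₀ M :=
  c.sum fun l m => Finsupp.mapDomain (· + t) (Cexp hδ l b m)

lemma pol_sum {α : Type} (s : Finset α) (g : α → (ℕ →₀ M)) :
    pol sp im (∑ i ∈ s, g i) = ∑ i ∈ s, pol sp im (g i) :=
  map_sum (polHom sp im) _ _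

lemma smul_Psi (c : ℕ →₀ M) (b : R) (t : ℕ) :
    op (sp.ι b * sp.x ^ t) • pol sp im c = pol sp im (Psi hδ c b t) := by
  rw [Psi, Finsupp.sum, pol_sum]
  conv_lhs => rw [pol, Finsupp.sum, Finset.smul_sum]
  refine Finset.sum_congr rfl fun l _ => ?_
  show op (sp.ι b * sp.x ^ t) • (op (sp.x ^ l) • im.j (c l)) = _
  rw [← mul_smul, ← op_mul, ← mul_assoc, op_mul, mul_smul, smul_Cexp sp hδ im,
    smul_xpow sp im]

lemma Psi_apply_top (c : ℕ →₀ M) (b : R) (t k : ℕ) (hk : ∀ l, k < l → c l = 0) :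
    Psi hδ c b t (k + t) = op ((⇑σ)^[k] b) • c k := by
  rw [Psi, Finsupp.sum_apply]
  rw [Finsupp.sum_eq_single k]
  · rw [Finsupp.mapDomain_apply (add_left_injective t), Cexp_apply, Dexp_self]
  · intro l hl hlk
    rcases lt_or_gt_of_ne hlk with h | h
    · rw [Finsupp.mapDomain_apply (add_left_injective t), Cexp_apply,
        Dexp_gt hδ l b k h, op_zero, zero_smul]
    · exact absurd (hk l h) hl
  · intro _; rw [Cexp_zero, Finsupp.mapDomain_zero, Finsupp.coe_zero, Pi.zero_apply]

lemma Psi_bound (c : ℕ →₀ M) (b : R) (t k : ℕ) (hk : ∀ l, k < l → c l = 0)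
    (u : ℕ) (hu : k + t < u) : Psi hδ c b t u = 0 := by
  rw [Psi, Finsupp.sum_apply, Finsupp.sum]
  refine Finset.sum_eq_zero fun l hl => ?_
  obtain ⟨v, rfl⟩ : ∃ v, u = v + t := ⟨u - t, by omega⟩
  rw [Finsupp.mapDomain_apply (add_left_injective t), Cexp_apply]
  have hlk : l ≤ k := by
    by_contra h
    exact (Finsupp.mem_support_iff.mp hl) (hk l (by omega))
  rw [Dexp_gt hδ l b v (by omega), op_zero, zero_smul]

lemma Psi_memP (P : Set R) (hPmem : ∀ r : R, r ∈ P → ∀ m : M, op r • m = 0)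
    (h0 : (0:R) ∈ P) (hadd : ∀ a ∈ P, ∀ b ∈ P, a + b ∈ P)
    (hσ : ∀ a ∈ P, σ a ∈ P) (hδ' : ∀ a ∈ P, δ a ∈ P)
    (c : ℕ →₀ M) (b : R) (hb : b ∈ P) (t : ℕ) : Psi hδ c b t = 0 := by
  rw [Psi, Finsupp.sum]
  refine Finset.sum_eq_zero fun l _ => ?_
  have : Cexp hδ l b (c l) = 0 := by
    ext u
    rw [Cexp_apply]
    exact hPmem _ (Dexp_mem hδ P h0 hadd hσ hδ' l b hb u) _
  rw [this, Finsupp.mapDomain_zero]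

lemma smul_f (b : ℕ →₀ R) (c : ℕ →₀ M) :
    op (b.sum fun t a => sp.ι a * sp.x ^ t) • pol sp im c
      = pol sp im (b.sum fun t a => Psi hδ c a t) := by
  rw [Finsupp.sum, Finsupp.sum, pol_sum, Finset.op_sum, Finset.sum_smul]
  exact Finset.sum_congr rfl fun t _ => smul_Psi sp hδ im c (b t) t

lemma sigma_iter_mem {P : Set R} (hσP : ⇑σ '' P = P) (k : ℕ) (a : R)
    (h : (⇑σ)^[k] a ∈ P) : a ∈ P := by
  induction k generalizing a with
  | zero => exact h
  | succ k ih =>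
    have h1 : (⇑σ)^[k] (σ a) ∈ P := by rwa [← Function.iterate_succ_apply]
    have h2 := ih _ h1
    rw [← hσP] at h2
    obtain ⟨a', ha', he⟩ := h2
    exact σ.injective he ▸ ha'

lemma key (im : Induced R S M N sp) (hδ : IsSigmaDeriv σ δ) (hMprime : IsPrimeSub (⊤ : Submodule Rᵐᵒᵖ M))
    (P : Set R) (hP : P = {r : R | ∀ m : M, op r • m = 0})
    (hσP : ⇑σ '' P = P) (hδP' : δ '' P ⊆ P)
    (V : Submodule Sᵐᵒᵖ N) (hVne : V ≠ ⊥) (F : Sᵐᵒᵖ) (hFV : ∀ v ∈ V, F • v = 0) :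
    ∃ b : ℕ →₀ R, (∀ i, b i ∈ P) ∧ unop F = b.sum fun i a => sp.ι a * sp.x ^ i := by
  classical
  have hPmem : ∀ r : R, r ∈ P ↔ ∀ m : M, op r • m = 0 := fun r => by rw [hP]; exact Iff.rfl
  have h0 : (0:R) ∈ P := (hPmem 0).mpr (fun m => by simp)
  have hadd : ∀ a ∈ P, ∀ b ∈ P, a + b ∈ P := fun a ha b hb => (hPmem _).mpr fun m => by
    rw [op_add, add_smul, (hPmem a).mp ha m, (hPmem b).mp hb m, add_zero]
  have hσ : ∀ a ∈ P, σ a ∈ P := fun a ha => hσP ▸ Set.mem_image_of_mem _ ha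
  have hδ'' : ∀ a ∈ P, δ a ∈ P := fun a ha => hδP' (Set.mem_image_of_mem _ ha)
  obtain ⟨ν₀, hν₀V, hν₀⟩ := (Submodule.ne_bot_iff V).mp hVne
  obtain ⟨c₀, rfl⟩ := pol_surj sp im ν₀
  have hc₀ : c₀ ≠ 0 := fun h => hν₀ (by rw [h, pol_zero])
  have hsupp : c₀.support.Nonempty := Finsupp.support_nonempty_iff.mpr hc₀
  set k := c₀.support.max' hsupp with hk
  have hc₀k : c₀ k ≠ 0 := Finsupp.mem_support_iff.mp (c₀.support.max'_mem hsupp)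
  have hc₀bd : ∀ l, k < l → c₀ l = 0 := fun l hl => by
    by_contra h
    exact absurd (Finset.le_max' _ l (Finsupp.mem_support_iff.mpr h)) (by omega)
  let W : Submodule Rᵐᵒᵖ M :=
    { carrier := {m | ∃ c : ℕ →₀ M, pol sp im c ∈ V ∧ (∀ l, k < l → c l = 0) ∧ c k = m}
      add_mem' := by
        rintro m₁ m₂ ⟨c₁, h₁V, h₁b, rfl⟩ ⟨c₂, h₂V, h₂b, rfl⟩
        exact ⟨c₁ + c₂, by rw [pol_add]; exact V.add_mem h₁V h₂V,
          fun l hl => by rw [Finsupp.add_apply, h₁b l hl, h₂b l hl, add_zero], rfl⟩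
      zero_mem' := ⟨0, by rw [pol_zero]; exact V.zero_mem, fun l _ => rfl, rfl⟩
      smul_mem' := by
        rintro t m ⟨c, hcV, hcb, rfl⟩
        refine ⟨Psi hδ c ((⇑σ.symm)^[k] (unop t)) 0, ?_, ?_, ?_⟩
        · rw [← smul_Psi sp hδ im]
          exact V.smul_mem _ hcV
        · intro l hl
          exact Psi_bound hδ c _ 0 k hcb l (by omega)
        · have h3 := Psi_apply_top hδ c ((⇑σ.symm)^[k] (unop t)) 0 k hcb
          rw [Function.LeftInverse.iterate σ.apply_symm_apply k (unop t)] at h3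
          simpa using h3 }
  have hWne : W ≠ ⊥ :=
    (Submodule.ne_bot_iff W).mpr ⟨c₀ k, ⟨c₀, hν₀V, hc₀bd, rfl⟩, hc₀k⟩
  have hannW := hMprime.2 W le_top hWne
  have hWP : ∀ r : R, (∀ m ∈ W, op r • m = 0) → r ∈ P := by
    intro r h
    have h1 : op r ∈ {t : Rᵐᵒᵖ | ∀ v ∈ W, t • v = 0} := h
    rw [hannW] at h1
    exact (hPmem r).mpr fun m => h1 m Submodule.mem_top
  obtain ⟨b, hb⟩ := sp.basis.2 (unop F)
  refine ⟨b, ?_, hb.symm⟩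
  intro i
  by_contra hbad
  set T := b.support.filter (fun u => b u ∉ P) with hT
  have hTne : T.Nonempty :=
    ⟨i, Finset.mem_filter.mpr ⟨Finsupp.mem_support_iff.mpr (fun h => hbad (h ▸ h0)), hbad⟩⟩
  set t := T.max' hTne with ht
  have hbt : b t ∉ P := (Finset.mem_filter.mp (T.max'_mem hTne)).2
  have hgt : ∀ u, t < u → b u ∈ P := by
    intro u hu
    by_contra hu'
    have hmem : u ∈ T :=
      Finset.mem_filter.mpr ⟨Finsupp.mem_support_iff.mpr (fun h => hu' (h ▸ h0)), hu'⟩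
    exact absurd (Finset.le_max' T u hmem) (by omega)
  refine hbt (sigma_iter_mem hσP k (b t) (hWP _ ?_))
  rintro m ⟨c, hcV, hcb, rfl⟩
  have h1 : pol sp im (b.sum fun u a => Psi hδ c a u) = 0 := by
    have hb' : (b.sum fun i a => sp.ι a * sp.x ^ i) = unop F := hb
    rw [← smul_f sp hδ im, hb', op_unop]
    exact hFV _ hcV
  have h2 : (b.sum fun u a => Psi hδ c a u) = 0 := pol_inj sp im (by rw [h1, pol_zero])
  have h3 : (b.sum fun u a => Psi hδ c a u) (k + t) = 0 := by rw [h2]; rfl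
  rw [Finsupp.sum_apply, Finsupp.sum_eq_single t ?hz ?ho] at h3
  · rwa [Psi_apply_top hδ c (b t) t k hcb] at h3
  case hz =>
    intro u hu hut
    rcases lt_or_gt_of_ne hut with h | h
    · rw [Psi_bound hδ c (b u) u k hcb (k+t) (by omega)]
    · rw [Psi_memP hδ P (fun r hr => (hPmem r).mp hr) h0 hadd hσ hδ'' c (b u) (hgt u h) u]
      rfl
  case ho =>
    intro _
    rw [Psi_memP hδ P (fun r hr => (hPmem r).mp hr) h0 hadd hσ hδ'' c 0 h0 t]
    rfl

lemma PS_ann (im : Induced R S M N sp) (hδ : IsSigmaDeriv σ δ)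
    (P : Set R) (hP : P = {r : R | ∀ m : M, op r • m = 0})
    (hσP : ⇑σ '' P = P) (hδP' : δ '' P ⊆ P)
    (b : ℕ →₀ R) (hbP : ∀ i, b i ∈ P) (ν : N) :
    op (b.sum fun i a => sp.ι a * sp.x ^ i) • ν = 0 := by
  have hPmem : ∀ r : R, r ∈ P ↔ ∀ m : M, op r • m = 0 := fun r => by rw [hP]; exact Iff.rfl
  have h0 : (0:R) ∈ P := (hPmem 0).mpr (fun m => by simp)
  have hadd : ∀ a ∈ P, ∀ b ∈ P, a + b ∈ P := fun a ha b hb => (hPmem _).mpr fun m => by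
    rw [op_add, add_smul, (hPmem a).mp ha m, (hPmem b).mp hb m, add_zero]
  have hσ : ∀ a ∈ P, σ a ∈ P := fun a ha => hσP ▸ Set.mem_image_of_mem _ ha
  have hδ'' : ∀ a ∈ P, δ a ∈ P := fun a ha => hδP' (Set.mem_image_of_mem _ ha)
  obtain ⟨c, rfl⟩ := pol_surj sp im ν
  rw [smul_f sp hδ im]
  have : (b.sum fun u a => Psi hδ c a u) = 0 := by
    rw [Finsupp.sum]
    exact Finset.sum_eq_zero fun u _ =>
      Psi_memP hδ P (fun r hr => (hPmem r).mp hr) h0 hadd hσ hδ'' c (b u) (hbP u) u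
  rw [this, pol_zero]

lemma top_ne_bot (im : Induced R S M N sp)
    (hMprime : IsPrimeSub (⊤ : Submodule Rᵐᵒᵖ M)) :
    (⊤ : Submodule Sᵐᵒᵖ N) ≠ ⊥ := by
  obtain ⟨m, -, hm⟩ := (Submodule.ne_bot_iff _).mp hMprime.1
  refine (Submodule.ne_bot_iff _).mpr ⟨im.j m, Submodule.mem_top, fun h => hm ?_⟩
  have : pol sp im (Finsupp.single 0 m) = pol sp im 0 := by
    rw [pol_single_zero, pol_zero, h]
  exact (Finsupp.single_eq_zero).mp (pol_inj sp im this)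

end Stmt16Aux

open Stmt16Aux

/-- if `M` is a prime right `R`-module with `P = ann_R(M)` which is
`(σ, σ⁻¹, δ)`-stable, then `M ⊗_R S` is a prime right `S`-module whose annihilator (its
unique associated prime) is `PS`, the set of polynomials with all coefficients in `P`. -/
theorem stmt16 (sp : SkewPoly R S σ δ) (im : Induced R S M N sp) (hδ : IsSigmaDeriv σ δ)
    (hMprime : IsPrimeSub (⊤ : Submodule Rᵐᵒᵖ M))
    (P : Set R) (hP : P = {r : R | ∀ m : M, op r • m = 0})
    (hσP : ⇑σ '' P = P) (hδP : δ '' P ⊆ P) :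
    IsPrimeSub (⊤ : Submodule Sᵐᵒᵖ N) ∧
      {f : S | ∀ ν : N, op f • ν = 0} =
        {f : S | ∃ b : ℕ →₀ R, (∀ i, b i ∈ P) ∧ f = b.sum fun i a => sp.ι a * sp.x ^ i} := by
  constructor
  · refine ⟨top_ne_bot sp im hMprime, fun V _ hVne => Set.ext fun F => ⟨?_, ?_⟩⟩
    · intro hF ν _
      obtain ⟨b, hbP, hb⟩ := key sp im hδ hMprime P hP hσP hδP V hVne F hF
      have := PS_ann sp im hδ P hP hσP hδP b hbP ν
      rwa [← hb, op_unop] at this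
    · exact fun hF v hv => hF v Submodule.mem_top
  · ext f
    constructor
    · intro hf
      obtain ⟨b, hbP, hb⟩ := key sp im hδ hMprime P hP hσP hδP ⊤ (top_ne_bot sp im hMprime)
        (op f) (fun v _ => hf v)
      rw [unop_op] at hb
      exact ⟨b, hbP, hb⟩
    · rintro ⟨b, hbP, rfl⟩ ν
      exact PS_ann sp im hδ P hP hσP hδP b hbP ν
end

section
/- Let R be a ring, σ an automorphism of R, and δ a q-quantized σ-derivation (δσ = qσδ with q central invertible, σ(q) = q, δ(q) = 0). Let S = R[x; σ, δ] and M a prime right R-module with P = ann_R(M). If σ(P) = P, then M ⊗_R S is a prime right S-module with annihilator equal to P_δ S, where P_δ = {a ∈ P | δ^n(a) ∈ P for all n ∈ ℕ}. -/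
open MulOpposite

variable {R S M N : Type} [Ring R] [Ring S] [AddCommGroup M] [Module Rᵐᵒᵖ M]
  [AddCommGroup N] [Module Sᵐᵒᵖ N] {σ : R ≃+* R} {δ : R → R}

section Aux17

/-! ### Auxiliary machinery for `stmt17` -/

/-- The polynomial map `(ℕ →₀ R) →+ S` underlying `sp.basis`. -/
noncomputable def psiHom (sp : SkewPoly R S σ δ) : (ℕ →₀ R) →+ S where
  toFun := fun c => c.sum fun i a => sp.ι a * sp.x ^ i
  map_zero' := Finsupp.sum_zero_index
  map_add' := fun b c => by
    show (b + c).sum (fun i a => sp.ι a * sp.x ^ i)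
      = (b.sum fun i a => sp.ι a * sp.x ^ i) + (c.sum fun i a => sp.ι a * sp.x ^ i)
    exact Finsupp.sum_add_index' (fun i => by simp) (fun i a a' => by rw [map_add, add_mul])

/-- The additive equivalence `(ℕ →₀ R) ≃+ S`. -/
noncomputable def psiE (sp : SkewPoly R S σ δ) : (ℕ →₀ R) ≃+ S :=
  AddEquiv.ofBijective (psiHom sp) (by
    have h : ⇑(psiHom sp) = fun c : ℕ →₀ R => c.sum fun i a => sp.ι a * sp.x ^ i := rfl
    rw [h]; exact sp.basis)

lemma psiE_apply (sp : SkewPoly R S σ δ) (b : ℕ →₀ R) :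
    psiE sp b = b.sum fun i a => sp.ι a * sp.x ^ i := rfl

lemma psiE_single (sp : SkewPoly R S σ δ) (e : ℕ) (a : R) :
    psiE sp (Finsupp.single e a) = sp.ι a * sp.x ^ e := by
  rw [psiE_apply, Finsupp.sum_single_index (by simp)]

/-- Coefficient extraction on `S`. -/
noncomputable def cS (sp : SkewPoly R S σ δ) (e : ℕ) : S →+ R :=
  (Finsupp.applyAddHom e).comp (psiE sp).symm.toAddMonoidHom

lemma cS_psiE (sp : SkewPoly R S σ δ) (e : ℕ) (b : ℕ →₀ R) :
    cS sp e (psiE sp b) = b e := by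
  simp [cS, AddEquiv.symm_apply_apply]

lemma psiE_symm_apply (sp : SkewPoly R S σ δ) (f : S) (e : ℕ) :
    (psiE sp).symm f e = cS sp e f := rfl

lemma cS_mono (sp : SkewPoly R S σ δ) (e i : ℕ) (a : R) :
    cS sp e (sp.ι a * sp.x ^ i) = if i = e then a else 0 := by
  rw [← psiE_single, cS_psiE, Finsupp.single_apply]

lemma eq_psiE_symm (sp : SkewPoly R S σ δ) (f : S) :
    f = psiE sp ((psiE sp).symm f) := ((psiE sp).apply_symm_apply f).symm

/-- The polynomial map `(ℕ →₀ M) →+ N`. -/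
noncomputable def phiHom (sp : SkewPoly R S σ δ) (im : Induced R S M N sp) :
    (ℕ →₀ M) →+ N where
  toFun := fun c => c.sum fun i m => op (sp.x ^ i) • im.j m
  map_zero' := Finsupp.sum_zero_index
  map_add' := fun b c => by
    show (b + c).sum (fun i m => op (sp.x ^ i) • im.j m)
      = (b.sum fun i m => op (sp.x ^ i) • im.j m) + (c.sum fun i m => op (sp.x ^ i) • im.j m)
    exact Finsupp.sum_add_index' (fun i => by simp) (fun i m m' => by rw [map_add, smul_add])

/-- The additive equivalence `(ℕ →₀ M) ≃+ N`. -/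
noncomputable def phiE (sp : SkewPoly R S σ δ) (im : Induced R S M N sp) : (ℕ →₀ M) ≃+ N :=
  AddEquiv.ofBijective (phiHom sp im) (by
    have h : ⇑(phiHom sp im) = fun c : ℕ →₀ M => c.sum fun i m => op (sp.x ^ i) • im.j m := rfl
    rw [h]; exact im.free)

lemma phiE_apply (sp : SkewPoly R S σ δ) (im : Induced R S M N sp) (c : ℕ →₀ M) :
    phiE sp im c = c.sum fun i m => op (sp.x ^ i) • im.j m := rfl

lemma phiE_single (sp : SkewPoly R S σ δ) (im : Induced R S M N sp) (i : ℕ) (m : M) :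
    phiE sp im (Finsupp.single i m) = op (sp.x ^ i) • im.j m := by
  rw [phiE_apply, Finsupp.sum_single_index (by simp)]

/-- Coefficient extraction on `N`. -/
noncomputable def cN (sp : SkewPoly R S σ δ) (im : Induced R S M N sp) (e : ℕ) : N →+ M :=
  (Finsupp.applyAddHom e).comp (phiE sp im).symm.toAddMonoidHom

lemma cN_phiE (sp : SkewPoly R S σ δ) (im : Induced R S M N sp) (e : ℕ) (c : ℕ →₀ M) :
    cN sp im e (phiE sp im c) = c e := by
  simp [cN, AddEquiv.symm_apply_apply]

lemma cN_mono (sp : SkewPoly R S σ δ) (im : Induced R S M N sp) (e i : ℕ) (m : M) :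
    cN sp im e (op (sp.x ^ i) • im.j m) = if i = e then m else 0 := by
  rw [← phiE_single, cN_phiE, Finsupp.single_apply]

lemma eq_phiE_symm (sp : SkewPoly R S σ δ) (im : Induced R S M N sp) (ν : N) :
    ν = phiE sp im ((phiE sp im).symm ν) := ((phiE sp im).apply_symm_apply ν).symm

lemma phiE_symm_apply (sp : SkewPoly R S σ δ) (im : Induced R S M N sp) (ν : N) (e : ℕ) :
    (phiE sp im).symm ν e = cN sp im e ν := rfl

lemma ext_cN (sp : SkewPoly R S σ δ) (im : Induced R S M N sp) (ν : N)
    (h : ∀ e, cN sp im e ν = 0) : ν = 0 := by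
  have : (phiE sp im).symm ν = 0 := Finsupp.ext fun e => h e
  have := congrArg (phiE sp im) this
  rwa [← eq_phiE_symm, map_zero] at this

lemma op_mul_smul (a b : S) (ν : N) : op (a * b) • ν = op b • (op a • ν) := by
  rw [op_mul, mul_smul]


section RingFacts

lemma delta_zero (hδ : IsSigmaDeriv σ δ) : δ (0 : R) = 0 := by
  have := hδ.1 0 0
  simpa using this.symm

lemma delta_iter_zero (hδ : IsSigmaDeriv σ δ) (n : ℕ) : δ^[n] (0 : R) = 0 := by
  induction n with
  | zero => rfl
  | succ n ih => rw [Function.iterate_succ_apply, delta_zero hδ, ih]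

lemma delta_iter_add (hδ : IsSigmaDeriv σ δ) (n : ℕ) (a b : R) :
    δ^[n] (a + b) = δ^[n] a + δ^[n] b := by
  induction n generalizing a b with
  | zero => rfl
  | succ n ih => rw [Function.iterate_succ_apply, hδ.1, ih, Function.iterate_succ_apply,
      Function.iterate_succ_apply]

lemma sigma_iter_mul (k : ℕ) (a b : R) :
    (⇑σ)^[k] (a * b) = (⇑σ)^[k] a * (⇑σ)^[k] b := by
  induction k generalizing a b with
  | zero => rfl
  | succ k ih => rw [Function.iterate_succ_apply, map_mul, ih, Function.iterate_succ_apply,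
      Function.iterate_succ_apply]

lemma sigma_iter_surjective (k : ℕ) : Function.Surjective ((⇑σ)^[k] : R → R) := by
  induction k with
  | zero => exact fun a => ⟨a, rfl⟩
  | succ k ih => rw [Function.iterate_succ]; exact ih.comp σ.surjective

lemma P_zero {P : Set R} (hPm : ∀ a : R, a ∈ P ↔ ∀ m : M, op a • m = 0) : (0 : R) ∈ P := by
  rw [hPm]; intro m; rw [op_zero, zero_smul]

lemma P_add {P : Set R} (hPm : ∀ a : R, a ∈ P ↔ ∀ m : M, op a • m = 0)
    {a b : R} (ha : a ∈ P) (hb : b ∈ P) : a + b ∈ P := by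
  rw [hPm] at ha hb ⊢
  intro m; rw [op_add, add_smul, ha, hb, add_zero]

lemma P_left {P : Set R} (hPm : ∀ a : R, a ∈ P ↔ ∀ m : M, op a • m = 0)
    (r : R) {a : R} (ha : a ∈ P) : r * a ∈ P := by
  rw [hPm] at ha ⊢
  intro m
  rw [op_mul, mul_smul, ha]

lemma P_sigma_mem {P : Set R} (hσP : ⇑σ '' P = P) {a : R} : a ∈ P ↔ σ a ∈ P := by
  constructor
  · intro ha
    rw [← hσP]; exact ⟨a, ha, rfl⟩
  · intro ha
    rw [← hσP] at ha
    obtain ⟨a', ha', he⟩ := ha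
    rwa [← σ.injective he]

lemma P_sigma_iter_mem {P : Set R} (hσP : ⇑σ '' P = P) (k : ℕ) {a : R} :
    a ∈ P ↔ (⇑σ)^[k] a ∈ P := by
  induction k generalizing a with
  | zero => exact Iff.rfl
  | succ k ih => rw [Function.iterate_succ_apply, ← ih, ← P_sigma_mem hσP]

lemma delta_q_mul (hδ : IsSigmaDeriv σ δ) (q : R) (hσq : σ q = q) (hδq : δ q = 0) (b : R) :
    δ (q * b) = q * δ b := by
  rw [hδ.2, hσq, hδq, zero_mul, add_zero]

lemma delta_iter_q_mul (hδ : IsSigmaDeriv σ δ) (q : R) (hσq : σ q = q) (hδq : δ q = 0)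
    (n : ℕ) (b : R) : δ^[n] (q * b) = q * δ^[n] b := by
  induction n generalizing b with
  | zero => rfl
  | succ n ih => rw [Function.iterate_succ_apply, delta_q_mul hδ q hσq hδq, ih,
      Function.iterate_succ_apply]

lemma delta_iter_sigma (hδ : IsSigmaDeriv σ δ) (q : R) (hσq : σ q = q) (hδq : δ q = 0)
    (hquant : ∀ r : R, δ (σ r) = q * σ (δ r)) (n : ℕ) (a : R) :
    δ^[n] (σ a) = q ^ n * σ (δ^[n] a) := by
  induction n generalizing a with
  | zero => rw [pow_zero, one_mul]; rfl
  | succ n ih =>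
      rw [Function.iterate_succ_apply, hquant, delta_iter_q_mul hδ q hσq hδq, ih,
        Function.iterate_succ_apply, ← mul_assoc, ← pow_succ']

end RingFacts

/-- The set `P_δ`. -/
def Pdel (P : Set R) (δ : R → R) : Set R := {a | a ∈ P ∧ ∀ n : ℕ, δ^[n] a ∈ P}

section PdelFacts

lemma Pdel_zero {P : Set R} (hPm : ∀ a : R, a ∈ P ↔ ∀ m : M, op a • m = 0)
    (hδ : IsSigmaDeriv σ δ) : (0 : R) ∈ Pdel P δ :=
  ⟨P_zero hPm, fun n => by rw [delta_iter_zero hδ]; exact P_zero hPm⟩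

lemma Pdel_delta (hδ : IsSigmaDeriv σ δ) {P : Set R} {a : R} (ha : a ∈ Pdel P δ) :
    δ a ∈ Pdel P δ :=
  ⟨ha.2 1, fun n => by rw [← Function.iterate_succ_apply]; exact ha.2 (n + 1)⟩

lemma Pdel_sigma {P : Set R} (hPm : ∀ a : R, a ∈ P ↔ ∀ m : M, op a • m = 0)
    (hσP : ⇑σ '' P = P) (hδ : IsSigmaDeriv σ δ) (q : R) (hσq : σ q = q) (hδq : δ q = 0)
    (hquant : ∀ r : R, δ (σ r) = q * σ (δ r)) {a : R} (ha : a ∈ Pdel P δ) :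
    σ a ∈ Pdel P δ := by
  refine ⟨(P_sigma_mem hσP).1 ha.1, fun n => ?_⟩
  rw [delta_iter_sigma hδ q hσq hδq hquant]
  exact P_left hPm _ ((P_sigma_mem hσP).1 (ha.2 n))

lemma Pdel_left {P : Set R} (hPm : ∀ a : R, a ∈ P ↔ ∀ m : M, op a • m = 0)
    (hδ : IsSigmaDeriv σ δ) (r : R) {a : R} (ha : a ∈ Pdel P δ) : r * a ∈ Pdel P δ := by
  suffices h : ∀ n (r a : R), a ∈ Pdel P δ → δ^[n] (r * a) ∈ P by
    exact ⟨P_left hPm r ha.1, fun n => h n r a ha⟩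
  intro n
  induction n with
  | zero => exact fun r a ha => P_left hPm r ha.1
  | succ n ih =>
      intro r a ha
      rw [Function.iterate_succ_apply, hδ.2, delta_iter_add hδ]
      exact P_add hPm (ih _ _ (Pdel_delta hδ ha)) (ih _ _ ha)

end PdelFacts


section Smult

lemma x_mul_mono (sp : SkewPoly R S σ δ) (a : R) (i : ℕ) :
    sp.x * (sp.ι a * sp.x ^ i) = sp.ι (σ a) * sp.x ^ (i + 1) + sp.ι (δ a) * sp.x ^ i := by
  rw [← mul_assoc, sp.comm, add_mul, mul_assoc, ← pow_succ']

lemma cS_x_mul_zero (hδ : IsSigmaDeriv σ δ) (sp : SkewPoly R S σ δ) (f : S) :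
    cS sp 0 (sp.x * f) = δ (cS sp 0 f) := by
  rw [eq_psiE_symm sp f]
  generalize (psiE sp).symm f = b
  induction b using Finsupp.induction_linear with
  | zero => simp [delta_zero hδ]
  | add g h hg hh =>
      simp only [map_add, mul_add, hg, hh, hδ.1]
  | single i a =>
      rw [psiE_single, x_mul_mono, map_add, cS_mono, cS_mono, cS_mono]
      cases i with
      | zero => simp [delta_zero hδ]
      | succ i => simp [delta_zero hδ]

lemma cS_x_mul_succ (hδ : IsSigmaDeriv σ δ) (sp : SkewPoly R S σ δ) (e : ℕ) (f : S) :
    cS sp (e + 1) (sp.x * f) = σ (cS sp e f) + δ (cS sp (e + 1) f) := by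
  rw [eq_psiE_symm sp f]
  generalize (psiE sp).symm f = b
  induction b using Finsupp.induction_linear with
  | zero => simp [delta_zero hδ]
  | add g h hg hh =>
      simp only [map_add, mul_add, hg, hh, hδ.1]
      abel
  | single i a =>
      rw [psiE_single, x_mul_mono, map_add, cS_mono, cS_mono, cS_mono, cS_mono]
      by_cases h1 : i = e
      · have h2 : ¬ i = e + 1 := by omega
        simp [h1, h2, delta_zero hδ]
      · by_cases h2 : i = e + 1
        · have h3 : ¬ i + 1 = e + 1 := by omega
          simp [h1, h2, h3]
        · have h3 : ¬ i + 1 = e + 1 := by omega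
          simp [h1, h2, h3, delta_zero hδ]

lemma top_gen (hδ : IsSigmaDeriv σ δ) (sp : SkewPoly R S σ δ) (t : ℕ) (n : ℕ) (f : S)
    (hf : ∀ e, t < e → cS sp e f = 0) :
    (∀ e, t + n < e → cS sp e (sp.x ^ n * f) = 0) ∧
      cS sp (t + n) (sp.x ^ n * f) = (⇑σ)^[n] (cS sp t f) := by
  induction n with
  | zero =>
      rw [pow_zero, one_mul]
      exact ⟨fun e he => hf e (by omega), rfl⟩
  | succ n ih =>
      have hx : sp.x ^ (n + 1) * f = sp.x * (sp.x ^ n * f) := by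
        rw [pow_succ', mul_assoc]
      constructor
      · intro e he
        cases e with
        | zero => omega
        | succ e =>
            rw [hx, cS_x_mul_succ hδ, ih.1 e (by omega), ih.1 (e + 1) (by omega),
              map_zero, delta_zero hδ, add_zero]
      · rw [hx, show t + (n + 1) = (t + n) + 1 by omega, cS_x_mul_succ hδ, ih.2,
          ih.1 (t + n + 1) (by omega), delta_zero hδ, add_zero]
        exact (Function.iterate_succ_apply' (⇑σ) n ((cS sp t) f)).symm

lemma bot_gen (hδ : IsSigmaDeriv σ δ) (sp : SkewPoly R S σ δ) (t : ℕ) (n : ℕ) (f : S)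
    (hf : ∀ e, e < t → cS sp e f = 0) :
    (∀ e, e < t → cS sp e (sp.x ^ n * f) = 0) ∧
      cS sp t (sp.x ^ n * f) = δ^[n] (cS sp t f) := by
  induction n with
  | zero =>
      rw [pow_zero, one_mul]
      exact ⟨fun e he => hf e he, rfl⟩
  | succ n ih =>
      have hx : sp.x ^ (n + 1) * f = sp.x * (sp.x ^ n * f) := by
        rw [pow_succ', mul_assoc]
      constructor
      · intro e he
        cases e with
        | zero =>
            rw [hx, cS_x_mul_zero hδ, ih.1 0 he, delta_zero hδ]
        | succ e =>
            rw [hx, cS_x_mul_succ hδ, ih.1 e (by omega), ih.1 (e + 1) he, map_zero,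
              delta_zero hδ, add_zero]
      · cases t with
        | zero =>
            rw [hx, cS_x_mul_zero hδ, ih.2]
            exact (Function.iterate_succ_apply' δ n ((cS sp 0) f)).symm
        | succ t =>
            rw [hx, cS_x_mul_succ hδ, ih.2, ih.1 t (by omega), map_zero, zero_add]
            exact (Function.iterate_succ_apply' δ n ((cS sp (t+1)) f)).symm

lemma iota_mul (sp : SkewPoly R S σ δ) (r : R) (b : ℕ →₀ R) :
    sp.ι r * psiE sp b = psiE sp (b.mapRange (fun a => r * a) (mul_zero r)) := by
  induction b using Finsupp.induction_linear with
  | zero => rw [map_zero, mul_zero, Finsupp.mapRange_zero, map_zero]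
  | add g h hg hh =>
      rw [map_add, mul_add, hg, hh, Finsupp.mapRange_add (mul_add r), map_add]
  | single i a =>
      rw [psiE_single, Finsupp.mapRange_single, psiE_single, ← mul_assoc, ← map_mul]

lemma cS_iota (sp : SkewPoly R S σ δ) (a : R) :
    (∀ e, 0 < e → cS sp e (sp.ι a) = 0) ∧ cS sp 0 (sp.ι a) = a := by
  have h : sp.ι a = sp.ι a * sp.x ^ 0 := by rw [pow_zero, mul_one]
  constructor
  · intro e he
    rw [h, cS_mono]
    simp [Nat.pos_iff_ne_zero.1 he |>.symm]
  · rw [h, cS_mono]; simp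

lemma cS_xpow_iota (hδ : IsSigmaDeriv σ δ) (sp : SkewPoly R S σ δ) (i : ℕ) (a : R) :
    (∀ e, i < e → cS sp e (sp.x ^ i * sp.ι a) = 0) ∧
      cS sp i (sp.x ^ i * sp.ι a) = (⇑σ)^[i] a := by
  have := top_gen hδ sp 0 i (sp.ι a) (cS_iota sp a).1
  rw [zero_add] at this
  exact ⟨this.1, by rw [this.2, (cS_iota sp a).2]⟩

end Smult


section Nact

lemma op_smul_psiE (sp : SkewPoly R S σ δ) (b : ℕ →₀ R) (ν : N) :
    op (psiE sp b) • ν = b.sum fun e a => op (sp.ι a * sp.x ^ e) • ν := by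
  induction b using Finsupp.induction_linear with
  | zero => simp
  | add g h hg hh =>
      rw [map_add, op_add, add_smul, hg, hh]
      exact (Finsupp.sum_add_index' (fun e => by simp)
        (fun e a a' => by rw [map_add, add_mul, op_add, add_smul])).symm
  | single e a => rw [psiE_single, Finsupp.sum_single_index (by simp)]

lemma cN_smul_j (sp : SkewPoly R S σ δ) (im : Induced R S M N sp) (e : ℕ) (f : S) (m : M) :
    cN sp im e (op f • im.j m) = op (cS sp e f) • m := by
  rw [eq_psiE_symm sp f]
  generalize (psiE sp).symm f = b
  induction b using Finsupp.induction_linear with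
  | zero => simp
  | add g h hg hh =>
      rw [map_add, op_add, add_smul, map_add, hg, hh, map_add, op_add, add_smul]
  | single i a =>
      rw [psiE_single, op_mul_smul, ← im.j_smul, cN_mono, cS_mono]
      split_ifs <;> simp

lemma cN_xpow_smul (sp : SkewPoly R S σ δ) (im : Induced R S M N sp) (n s : ℕ) (ν : N) :
    cN sp im s (op (sp.x ^ n) • ν) = if n ≤ s then cN sp im (s - n) ν else 0 := by
  rw [eq_phiE_symm sp im ν]
  generalize (phiE sp im).symm ν = c
  induction c using Finsupp.induction_linear with
  | zero => simp
  | add g h hg hh =>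
      rw [map_add, smul_add, map_add, hg, hh]
      split_ifs with hns
      · rw [map_add]
      · rw [add_zero]
  | single i m =>
      rw [phiE_single, ← op_mul_smul, ← pow_add, cN_mono]
      by_cases hns : n ≤ s
      · rw [if_pos hns, cN_mono]
        by_cases h2 : i = s - n
        · rw [if_pos h2, if_pos (by omega)]
        · rw [if_neg h2, if_neg (by omega)]
      · rw [if_neg hns, if_neg (by omega)]

lemma cN_iota_smul (hδ : IsSigmaDeriv σ δ) (sp : SkewPoly R S σ δ)
    (im : Induced R S M N sp) (k : ℕ) (ν : N) (hν : ∀ e, k < e → cN sp im e ν = 0)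
    (a : R) :
    (∀ e, k < e → cN sp im e (op (sp.ι a) • ν) = 0) ∧
      cN sp im k (op (sp.ι a) • ν) = op ((⇑σ)^[k] a) • cN sp im k ν := by
  have hc : ∀ i, k < i → (phiE sp im).symm ν i = 0 := fun i hi => hν i hi
  have hrep : op (sp.ι a) • ν
      = ((phiE sp im).symm ν).sum fun i m => op (sp.x ^ i * sp.ι a) • im.j m := by
    conv_lhs => rw [eq_phiE_symm sp im ν]
    rw [phiE_apply, Finsupp.smul_sum]
    exact Finsupp.sum_congr fun i _ => by rw [op_mul_smul]
  constructor
  · intro e he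
    rw [hrep, map_finsuppSum]
    refine Finset.sum_eq_zero fun i hi => ?_
    have hik : i ≤ k := by
      by_contra hik
      exact (Finsupp.mem_support_iff.1 hi) (hc i (by omega))
    show cN sp im e (op (sp.x ^ i * sp.ι a) • im.j (((phiE sp im).symm ν) i)) = 0
    rw [cN_smul_j, (cS_xpow_iota hδ sp i a).1 e (by omega), op_zero, zero_smul]
  · have h0 : ∀ i, ((phiE sp im).symm ν) i ≠ 0 → i ≠ k →
        (cN sp im k) (op (sp.x ^ i * sp.ι a) • im.j (((phiE sp im).symm ν) i)) = 0 := by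
      intro i hfi hik
      have : i ≤ k := by
        by_contra h
        exact hfi (hc i (by omega))
      rw [cN_smul_j, (cS_xpow_iota hδ sp i a).1 k (by omega), op_zero, zero_smul]
    rw [hrep, map_finsuppSum,
      Finsupp.sum_eq_single k h0 (fun _ => by simp),
      cN_smul_j, (cS_xpow_iota hδ sp k a).2, phiE_symm_apply]

lemma mono_ann (sp : SkewPoly R S σ δ) (im : Induced R S M N sp) {P : Set R}
    (hPm : ∀ a : R, a ∈ P ↔ ∀ m : M, op a • m = 0) (hσP : ⇑σ '' P = P)
    (hδ : IsSigmaDeriv σ δ) (q : R) (hσq : σ q = q) (hδq : δ q = 0)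
    (hquant : ∀ r : R, δ (σ r) = q * σ (δ r))
    (jn : ℕ) {a : R} (ha : a ∈ Pdel P δ) (i : ℕ) (m : M) :
    op (sp.x ^ jn * (sp.ι a * sp.x ^ i)) • im.j m = 0 := by
  induction jn generalizing a i with
  | zero =>
      rw [pow_zero, one_mul, op_mul_smul, ← im.j_smul, (hPm a).1 ha.1 m, map_zero,
        smul_zero]
  | succ jn ih =>
      rw [pow_succ, mul_assoc, x_mul_mono, mul_add, op_add, add_smul,
        ih (Pdel_sigma hPm hσP hδ q hσq hδq hquant ha) (i + 1),
        ih (Pdel_delta hδ ha) i, add_zero]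

lemma Pdel_psi_ann (sp : SkewPoly R S σ δ) (im : Induced R S M N sp) {P : Set R}
    (hPm : ∀ a : R, a ∈ P ↔ ∀ m : M, op a • m = 0) (hσP : ⇑σ '' P = P)
    (hδ : IsSigmaDeriv σ δ) (q : R) (hσq : σ q = q) (hδq : δ q = 0)
    (hquant : ∀ r : R, δ (σ r) = q * σ (δ r))
    (b : ℕ →₀ R) (hb : ∀ e, b e ∈ Pdel P δ) (ν : N) :
    op (psiE sp b) • ν = 0 := by
  rw [op_smul_psiE]
  refine Finset.sum_eq_zero fun e he => ?_
  show op (sp.ι (b e) * sp.x ^ e) • ν = 0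
  conv_lhs => rw [eq_phiE_symm sp im ν]
  rw [phiE_apply, Finsupp.smul_sum]
  refine Finset.sum_eq_zero fun i hi => ?_
  show op (sp.ι (b e) * sp.x ^ e) • (op (sp.x ^ i) • im.j _) = 0
  rw [← op_mul_smul]
  exact mono_ann sp im hPm hσP hδ q hσq hδq hquant i (hb e) e _

end Nact


section Key

lemma key_lemma (sp : SkewPoly R S σ δ) (im : Induced R S M N sp)
    (hδ : IsSigmaDeriv σ δ) (q : R) (hσq : σ q = q) (hδq : δ q = 0)
    (hquant : ∀ r : R, δ (σ r) = q * σ (δ r))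
    (hMprime : IsPrimeSub (⊤ : Submodule Rᵐᵒᵖ M))
    {P : Set R} (hPm : ∀ a : R, a ∈ P ↔ ∀ m : M, op a • m = 0) (hσP : ⇑σ '' P = P)
    (N' : Submodule Sᵐᵒᵖ N) (hN' : N' ≠ ⊥) (f : S)
    (hf : ∀ ν ∈ N', op f • ν = 0) : ∀ t, cS sp t f ∈ Pdel P δ := by
  classical
  obtain ⟨ν₀, hν₀N, hν₀⟩ := (Submodule.ne_bot_iff N').1 hN'
  have hKne : ∃ k : ℕ, ∃ ν ∈ N', ν ≠ 0 ∧ cN sp im k ν ≠ 0 ∧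
      ∀ e, k < e → cN sp im e ν = 0 := by
    have hc : (phiE sp im).symm ν₀ ≠ 0 := fun h =>
      hν₀ (by rw [eq_phiE_symm sp im ν₀, h, map_zero])
    have hsupp : ((phiE sp im).symm ν₀).support.Nonempty :=
      Finsupp.support_nonempty_iff.2 hc
    refine ⟨((phiE sp im).symm ν₀).support.max' hsupp, ν₀, hν₀N, hν₀, ?_, ?_⟩
    · have h := Finset.max'_mem _ hsupp
      rw [Finsupp.mem_support_iff] at h
      exact h
    · intro e he
      by_contra h
      have hmem : e ∈ ((phiE sp im).symm ν₀).support := Finsupp.mem_support_iff.2 h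
      exact absurd (Finset.le_max' _ e hmem) (by omega)
  set k := Nat.find hKne with hkdef
  obtain ⟨ν, hνN, hνne, hνk, hνhigh⟩ := Nat.find_spec hKne
  have hmin : ∀ μ ∈ N', (∀ e, k ≤ e → cN sp im e μ = 0) → μ = 0 := by
    intro μ hμN hμ
    by_contra hμ0
    have hc : (phiE sp im).symm μ ≠ 0 := fun h =>
      hμ0 (by rw [eq_phiE_symm sp im μ, h, map_zero])
    have hsupp := Finsupp.support_nonempty_iff.2 hc
    set k' := ((phiE sp im).symm μ).support.max' hsupp with hk'
    have hk'mem : ((phiE sp im).symm μ) k' ≠ 0 :=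
      Finsupp.mem_support_iff.1 (Finset.max'_mem _ hsupp)
    have hlt : k' < k := by
      by_contra hge
      exact hk'mem (hμ k' (by omega))
    refine Nat.find_min hKne hlt ⟨μ, hμN, hμ0, hk'mem, fun e he => ?_⟩
    by_contra h
    have hmem : e ∈ ((phiE sp im).symm μ).support := Finsupp.mem_support_iff.2 h
    have hle : e ≤ k' := Finset.le_max' _ e hmem
    omega
  have hgood : ∀ p ∈ P, op (sp.ι p) • ν = 0 := by
    intro p hp
    refine hmin _ (Submodule.smul_mem N' _ hνN) ?_
    intro e he
    rcases Nat.eq_or_lt_of_le he with he' | he'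
    · rw [← he', (cN_iota_smul hδ sp im k ν hνhigh p).2]
      have hkp : (⇑σ)^[k] p ∈ P := (P_sigma_iter_mem hσP k).1 hp
      rw [hPm] at hkp
      exact hkp _
    · exact (cN_iota_smul hδ sp im k ν hνhigh p).1 e he'
  have hgoodP : ∀ b : ℕ →₀ R, (∀ e, b e ∈ P) → op (psiE sp b) • ν = 0 := by
    intro b hb
    rw [op_smul_psiE]
    refine Finset.sum_eq_zero fun e he => ?_
    show op (sp.ι (b e) * sp.x ^ e) • ν = 0
    rw [op_mul_smul, hgood _ (hb e), smul_zero]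
  have hstep1 : ∀ h : S, (∀ ν' ∈ N', op h • ν' = 0) → ∀ t, cS sp t h ∈ P := by
    intro h hh
    have core : ∀ t, (∀ e, t < e → cS sp e h ∈ P) → cS sp t h ∈ P := by
      intro t hhigh
      set b := (psiE sp).symm h with hb
      have relation : ∀ r : R, op ((⇑σ)^[k] (r * b t)) • cN sp im k ν = 0 := by
        intro r
        set bhigh := b.filter (fun e => t < e) with hbhigh
        set blow := b.filter (fun e => ¬ t < e) with hblow
        have hsplit : psiE sp bhigh + psiE sp blow = h := by
          rw [← map_add, hbhigh, hblow, Finsupp.filter_pos_add_filter_neg, hb,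
            AddEquiv.apply_symm_apply]
        have h1 : op (sp.ι r * h) • ν = 0 := by
          rw [op_mul_smul]
          exact hh _ (Submodule.smul_mem N' _ hνN)
        have h2 : op (sp.ι r * psiE sp bhigh) • ν = 0 := by
          rw [iota_mul]
          refine hgoodP _ fun e => ?_
          rw [Finsupp.mapRange_apply]
          by_cases hte : t < e
          · rw [hbhigh, Finsupp.filter_apply_pos (fun e => t < e) b hte]
            exact P_left hPm r (hhigh e hte)
          · rw [hbhigh, Finsupp.filter_apply_neg (fun e => t < e) b hte, mul_zero]
            exact P_zero hPm
        have h3 : op (sp.ι r * psiE sp blow) • ν = 0 := by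
          have hsub : sp.ι r * psiE sp blow = sp.ι r * h - sp.ι r * psiE sp bhigh := by
            rw [← mul_sub]
            congr 1
            rw [← hsplit]
            abel
          rw [hsub, op_sub, sub_smul, h1, h2, sub_zero]
        set b' := Finsupp.mapRange (fun a => r * a) (mul_zero r) blow with hb'
        have hb'high : ∀ e, t < e → b' e = 0 := by
          intro e he
          rw [hb', Finsupp.mapRange_apply, hblow,
            Finsupp.filter_apply_neg (fun e => ¬ t < e) b (not_not_intro he), mul_zero]
        have hb't : b' t = r * b t := by
          rw [hb', Finsupp.mapRange_apply, hblow,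
            Finsupp.filter_apply_pos (fun e => ¬ t < e) b (by omega : ¬ t < t)]
        have hco : cN sp im (k + t) (op (psiE sp b') • ν)
            = op ((⇑σ)^[k] (b' t)) • cN sp im k ν := by
          rw [op_smul_psiE, map_finsuppSum]
          have h0 : ∀ e, b' e ≠ 0 → e ≠ t →
              cN sp im (k + t) (op (sp.ι (b' e) * sp.x ^ e) • ν) = 0 := by
            intro e hfe het
            have he : e < t := by
              rcases lt_or_ge e t with h' | h'
              · exact h'
              · exact absurd (hb'high e (by omega)) hfe
            rw [op_mul_smul, cN_xpow_smul, if_pos (by omega)]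
            exact (cN_iota_smul hδ sp im k ν hνhigh (b' e)).1 (k + t - e) (by omega)
          rw [Finsupp.sum_eq_single t h0 (fun _ => by simp)]
          rw [op_mul_smul, cN_xpow_smul, if_pos (by omega), Nat.add_sub_cancel]
          exact (cN_iota_smul hδ sp im k ν hνhigh (b' t)).2
        have hz : op (psiE sp b') • ν = 0 := by
          rw [hb', ← iota_mul]
          exact h3
        rw [← hb't, ← hco, hz, map_zero]
      have hspan : Submodule.span Rᵐᵒᵖ {cN sp im k ν} ≠ ⊥ := fun hbot =>
        hνk (Submodule.span_singleton_eq_bot.1 hbot)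
      have hsets := hMprime.2 (Submodule.span Rᵐᵒᵖ {cN sp im k ν}) le_top hspan
      have hmem : op ((⇑σ)^[k] (b t)) ∈
          {s : Rᵐᵒᵖ | ∀ v ∈ Submodule.span Rᵐᵒᵖ {cN sp im k ν}, s • v = 0} := by
        intro v hv
        obtain ⟨s, hs⟩ := Submodule.mem_span_singleton.1 hv
        obtain ⟨r, hr⟩ := sigma_iter_surjective (σ := σ) k (unop s)
        rw [← hs, smul_smul, show op ((⇑σ)^[k] (b t)) * s
          = op (unop s * (⇑σ)^[k] (b t)) by rw [← op_unop s, ← op_mul, unop_op],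
          ← hr, ← sigma_iter_mul]
        exact relation r
      rw [hsets] at hmem
      have hmem2 : (⇑σ)^[k] (b t) ∈ P := by
        rw [hPm]
        intro m
        exact hmem m Submodule.mem_top
      exact (P_sigma_iter_mem hσP k).2 hmem2
    set b := (psiE sp).symm h with hb
    set D := b.support.sup id with hD
    have hDbound : ∀ e, D < e → cS sp e h = 0 := by
      intro e he
      by_contra hne
      have hmem : e ∈ b.support := Finsupp.mem_support_iff.2 hne
      have := Finset.le_sup (f := id) hmem
      simp only [id] at this
      omega
    have main : ∀ n t, D < t + n → cS sp t h ∈ P := by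
      intro n
      induction n with
      | zero =>
          intro t ht
          rw [hDbound t (by omega)]
          exact P_zero hPm
      | succ n ih =>
          intro t ht
          by_cases hDt : D < t
          · rw [hDbound t hDt]
            exact P_zero hPm
          · exact core t (fun e he => ih e (by omega))
    exact fun t => main (D + 1) t (by omega)
  intro t
  induction t using Nat.strong_induction_on with
  | _ t ih =>
    set b := (psiE sp).symm f with hbdef
    set blow := b.filter (fun e => e < t) with hblow
    have hblowPd : ∀ e, blow e ∈ Pdel P δ := by
      intro e
      by_cases he : e < t
      · rw [hblow, Finsupp.filter_apply_pos (fun e => e < t) b he]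
        exact ih e he
      · rw [hblow, Finsupp.filter_apply_neg (fun e => e < t) b he]
        exact Pdel_zero hPm hδ
    set g := f - psiE sp blow with hg
    have hgA : ∀ ν' ∈ N', op g • ν' = 0 := by
      intro ν' hν'
      rw [hg, op_sub, sub_smul, hf ν' hν',
        Pdel_psi_ann sp im hPm hσP hδ q hσq hδq hquant blow hblowPd ν', sub_zero]
    have hglow : ∀ e, e < t → cS sp e g = 0 := by
      intro e he
      rw [hg, map_sub, cS_psiE, hblow, Finsupp.filter_apply_pos (fun e => e < t) b he]
      exact sub_self (b e)
    have hgt : cS sp t g = cS sp t f := by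
      rw [hg, map_sub, cS_psiE, hblow,
        Finsupp.filter_apply_neg (fun e => e < t) b (by omega : ¬ t < t), sub_zero]
    refine ⟨?_, ?_⟩
    · have h := hstep1 g hgA t
      rwa [hgt] at h
    · intro n
      have hxg : ∀ ν' ∈ N', op (sp.x ^ n * g) • ν' = 0 := by
        intro ν' hν'
        rw [op_mul_smul]
        exact hgA _ (Submodule.smul_mem N' _ hν')
      have h := hstep1 _ hxg t
      rwa [(bot_gen hδ sp t n g hglow).2, hgt] at h

end Key

end Aux17

/-- if `δ` is a `q`-quantized `σ`-derivation, `M` is a prime right `R`-module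
with `P = ann_R(M)` and `σ(P) = P`, then `M ⊗_R S` is a prime right `S`-module with
annihilator `P_δ·S`, where `P_δ = {a ∈ P | δⁿ(a) ∈ P for all n}`. -/
theorem stmt17 (sp : SkewPoly R S σ δ) (im : Induced R S M N sp) (hδ : IsSigmaDeriv σ δ)
    (q : R) (hqc : ∀ r : R, q * r = r * q) (hqu : IsUnit q) (hσq : σ q = q) (hδq : δ q = 0)
    (hquant : ∀ r : R, δ (σ r) = q * σ (δ r))
    (hMprime : IsPrimeSub (⊤ : Submodule Rᵐᵒᵖ M))
    (P : Set R) (hP : P = {r : R | ∀ m : M, op r • m = 0})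
    (hσP : ⇑σ '' P = P) :
    IsPrimeSub (⊤ : Submodule Sᵐᵒᵖ N) ∧
      {f : S | ∀ ν : N, op f • ν = 0} =
        {f : S | ∃ b : ℕ →₀ R, (∀ i, b i ∈ P ∧ ∀ n : ℕ, δ^[n] (b i) ∈ P) ∧
          f = b.sum fun i a => sp.ι a * sp.x ^ i} := by
  have hPm : ∀ a : R, a ∈ P ↔ ∀ m : M, op a • m = 0 := fun a => by rw [hP]; exact Iff.rfl
  have key' := fun N' hN' f hf =>
    key_lemma sp im hδ q hσq hδq hquant hMprime hPm hσP N' hN' f hf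
  obtain ⟨m₀, -, hm₀⟩ := (Submodule.ne_bot_iff _).1 hMprime.1
  have htopne : (⊤ : Submodule Sᵐᵒᵖ N) ≠ ⊥ := by
    rw [Submodule.ne_bot_iff]
    refine ⟨im.j m₀, trivial, fun h0 => ?_⟩
    have h1 : phiE sp im (Finsupp.single 0 m₀) = 0 := by
      rw [phiE_single, pow_zero, op_one, one_smul]
      exact h0
    have h2 := (phiE sp im).injective (h1.trans (map_zero (phiE sp im)).symm)
    exact hm₀ (Finsupp.single_eq_zero.1 h2)
  have hann : {f : S | ∀ ν : N, op f • ν = 0} =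
      {f : S | ∃ b : ℕ →₀ R, (∀ i, b i ∈ P ∧ ∀ n : ℕ, δ^[n] (b i) ∈ P) ∧
        f = b.sum fun i a => sp.ι a * sp.x ^ i} := by
    ext f
    constructor
    · intro hf
      exact ⟨(psiE sp).symm f, fun i => key' ⊤ htopne f (fun ν _ => hf ν) i,
        eq_psiE_symm sp f⟩
    · rintro ⟨b, hb, rfl⟩
      intro ν
      exact Pdel_psi_ann sp im hPm hσP hδ q hσq hδq hquant b (fun e => hb e) ν
  refine ⟨⟨htopne, ?_⟩, hann⟩
  intro N' hle hN'
  ext s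
  simp only [Set.mem_setOf_eq]
  constructor
  · intro hs v _
    have hf : ∀ ν ∈ N', op (unop s) • ν = 0 := fun ν hν => by
      rw [op_unop]; exact hs ν hν
    have hPd := key' N' hN' (unop s) hf
    have h2 : ∀ ν : N, op (unop s) • ν = 0 := by
      intro ν
      rw [eq_psiE_symm sp (unop s)]
      exact Pdel_psi_ann sp im hPm hσP hδ q hσq hδq hquant _ (fun e => hPd e) ν
    rw [← op_unop s]
    exact h2 v
  · intro hs v hv
    exact hs v trivial
end

section
/- Let R be a ring, σ an automorphism of R, δ a σ-derivation, S = R[x; σ, δ], M a right R-module, and m ∈ M ⊗_R S a good polynomial of degree k with leading coefficient m_k. If the cyclic submodule m_k R of M is nonsingular, then for every n ≥ k there exists a good polynomial f ∈ mS with deg(f) = n. -/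
open MulOpposite

variable {R S M N : Type} [Ring R] [Ring S] [AddCommGroup M] [Module Rᵐᵒᵖ M]
  [AddCommGroup N] [Module Sᵐᵒᵖ N] {σ : R ≃+* R} {δ : R → R}

namespace Stmt19Aux

variable (sp : SkewPoly R S σ δ) (im : Induced R S M N sp)

theorem pol_zero : pol sp im 0 = 0 := by simp [pol]

theorem pol_add (c₁ c₂ : ℕ →₀ M) : pol sp im (c₁ + c₂) = pol sp im c₁ + pol sp im c₂ := by
  simp only [pol]
  exact Finsupp.sum_add_index' (fun i => by simp) (fun i m₁ m₂ => by rw [map_add, smul_add])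

theorem pol_single (i : ℕ) (m : M) :
    pol sp im (Finsupp.single i m) = op (sp.x ^ i) • im.j m := by
  simp only [pol]
  exact Finsupp.sum_single_index (by simp)

/-- shift of coefficients: multiplication by `x` on the right. -/
noncomputable def shift (g : ℕ →₀ M) : ℕ →₀ M := g.mapDomain (· + 1)

theorem shift_apply (g : ℕ →₀ M) (i : ℕ) : shift g (i + 1) = g i :=
  Finsupp.mapDomain_apply (add_left_injective 1) g i

theorem shift_top (g : ℕ →₀ M) (n : ℕ) (h : ∀ i, n < i → g i = 0) :
    ∀ i, n + 1 < i → shift g i = 0 := by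
  intro i hi
  obtain ⟨t, rfl⟩ : ∃ t, i = t + 1 := ⟨i - 1, by omega⟩
  rw [shift_apply]
  exact h t (by omega)

theorem pol_shift (g : ℕ →₀ M) : pol sp im (shift g) = op sp.x • pol sp im g := by
  simp only [pol, shift]
  rw [Finsupp.sum_mapDomain_index (fun b => by simp) (fun b m₁ m₂ => by rw [map_add, smul_add]),
    Finsupp.smul_sum]
  refine Finsupp.sum_congr fun i _ => ?_
  rw [← mul_smul, ← op_mul, pow_succ]

theorem iter_map_mul (n : ℕ) (a b : R) :
    (⇑σ)^[n] (a * b) = (⇑σ)^[n] a * (⇑σ)^[n] b := by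
  induction n generalizing a b with
  | zero => rfl
  | succ n ih =>
    rw [Function.iterate_succ_apply, Function.iterate_succ_apply,
      Function.iterate_succ_apply, map_mul, ih]

theorem iter_map_zero (n : ℕ) : (⇑σ)^[n] (0 : R) = 0 := by
  induction n with
  | zero => rfl
  | succ n ih => rw [Function.iterate_succ_apply, map_zero, ih]

theorem mono (i : ℕ) (u : R) (m : M) :
    ∃ g : ℕ →₀ M, pol sp im g = op (sp.x ^ i * sp.ι u) • im.j m ∧
      g i = op ((⇑σ)^[i] u) • m ∧ ∀ t, i < t → g t = 0 := by
  induction i generalizing u with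
  | zero =>
    refine ⟨Finsupp.single 0 (op u • m), ?_, ?_, ?_⟩
    · rw [pol_single, im.j_smul, pow_zero, one_mul, op_one, one_smul]
    · simp
    · intro t ht
      exact Finsupp.single_eq_of_ne (by omega)
  | succ i ih =>
    obtain ⟨g1, hg1, hg1i, hg1top⟩ := ih (σ u)
    obtain ⟨g2, hg2, hg2i, hg2top⟩ := ih (δ u)
    refine ⟨shift g1 + g2, ?_, ?_, ?_⟩
    · rw [pol_add, pol_shift, hg1, hg2]
      conv_rhs => rw [pow_succ, mul_assoc, sp.comm, mul_add, ← mul_assoc,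
        op_add, add_smul, op_mul, mul_smul]
    · rw [Finsupp.add_apply, shift_apply, hg1i, hg2top (i + 1) (by omega), add_zero,
        Function.iterate_succ_apply]
    · intro t ht
      obtain ⟨s, rfl⟩ : ∃ s, t = s + 1 := ⟨t - 1, by omega⟩
      rw [Finsupp.add_apply, shift_apply, hg1top s (by omega), hg2top (s + 1) (by omega),
        add_zero]

theorem smul_pol_lt : ∀ (n : ℕ) (e : ℕ →₀ M) (u : R), (∀ i, n ≤ i → e i = 0) →
    ∃ e', pol sp im e' = op (sp.ι u) • pol sp im e ∧ ∀ i, n ≤ i → e' i = 0 := by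
  intro n
  induction n with
  | zero =>
    intro e u he
    have h0 : e = 0 := Finsupp.ext fun i => he i (Nat.zero_le i)
    exact ⟨0, by rw [h0, pol_zero, smul_zero], fun i _ => rfl⟩
  | succ n ih =>
    intro e u he
    obtain ⟨eL, heL, heLtop⟩ := ih (e.erase n) u (fun i hi => by
      rcases eq_or_lt_of_le hi with h | h
      · rw [← h, Finsupp.erase_same]
      · rw [Finsupp.erase_ne (by omega)]; exact he i h)
    obtain ⟨g, hg, hgn, hgtop⟩ := mono sp im n u (e n)
    refine ⟨eL + g, ?_, ?_⟩
    · rw [pol_add, heL, hg]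
      conv_rhs => rw [← Finsupp.erase_add_single n e, pol_add, pol_single, smul_add,
        ← mul_smul, ← op_mul]
    · intro i hi
      rw [Finsupp.add_apply, heLtop i (by omega), hgtop i (by omega), add_zero]

theorem smul_pol (n : ℕ) (e : ℕ →₀ M) (u : R) (he : ∀ i, n < i → e i = 0) :
    ∃ e', pol sp im e' = op (sp.ι u) • pol sp im e ∧
      e' n = op ((⇑σ)^[n] u) • e n ∧ ∀ i, n < i → e' i = 0 := by
  obtain ⟨eL, heL, heLtop⟩ := smul_pol_lt sp im n (e.erase n) u (fun i hi => by
    rcases eq_or_lt_of_le hi with h | h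
    · rw [← h, Finsupp.erase_same]
    · rw [Finsupp.erase_ne (by omega)]; exact he i h)
  obtain ⟨g, hg, hgn, hgtop⟩ := mono sp im n u (e n)
  refine ⟨eL + g, ?_, ?_, ?_⟩
  · rw [pol_add, heL, hg]
    conv_rhs => rw [← Finsupp.erase_add_single n e, pol_add, pol_single, smul_add,
      ← mul_smul, ← op_mul]
  · rw [Finsupp.add_apply, heLtop n le_rfl, hgn, zero_add]
  · intro i hi
    rw [Finsupp.add_apply, heLtop i (by omega), hgtop i hi, add_zero]

end Stmt19Aux

open Stmt19Aux in
/-- if `m` is a good polynomial of degree `k` with leading coefficient `m_k`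
and the cyclic submodule `m_k·R` of `M` is nonsingular, then for every `n ≥ k` there is a
good polynomial of degree `n` in `m·S`. -/
theorem stmt19 (sp : SkewPoly R S σ δ) (im : Induced R S M N sp) (hδ : IsSigmaDeriv σ δ)
    (ν : N) (k : ℕ) (c : ℕ →₀ M) (hc : pol sp im c = ν) (hk : c k ≠ 0)
    (htop : ∀ i, k < i → c i = 0) (hgood : GoodAt sp im ν k)
    (hns : ∀ m ∈ Submodule.span Rᵐᵒᵖ ({c k} : Set M),
      (∀ r : R, r ≠ 0 → ∃ t : R, r * t ≠ 0 ∧ op (r * t) • m = 0) → m = 0) :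
    ∀ n, k ≤ n → ∃ f : S, GoodAt sp im (op f • ν) n := by
  suffices H : ∀ n, k ≤ n → ∃ (f : S) (d : ℕ →₀ M),
      pol sp im d = op f • ν ∧ d n ≠ 0 ∧ (∀ i, n < i → d i = 0) ∧
      d n ∈ Submodule.span Rᵐᵒᵖ ({c k} : Set M) ∧ GoodAt sp im (op f • ν) n by
    intro n hn
    obtain ⟨f, d, -, -, -, -, hg⟩ := H n hn
    exact ⟨f, hg⟩
  intro n hn
  induction n, hn using Nat.le_induction with
  | base =>
    have h1 : op (1 : S) • ν = ν := by rw [op_one, one_smul]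
    exact ⟨1, c, by rw [h1, hc], hk, htop, Submodule.mem_span_singleton_self _,
      by rw [h1]; exact hgood⟩
  | succ n hn ih =>
    obtain ⟨f, d, hd, hdn, hdtop, hdspan, -⟩ := ih
    have hne : ¬ ∀ r : R, r ≠ 0 → ∃ t : R, r * t ≠ 0 ∧ op (r * t) • d n = 0 :=
      fun hh => hdn (hns (d n) hdspan hh)
    push_neg at hne
    obtain ⟨r, hr0, hr⟩ := hne
    set b := (⇑σ.symm)^[n + 1] r with hbdef
    have hb : (⇑σ)^[n + 1] b = r :=
      Function.LeftInverse.iterate σ.apply_symm_apply (n + 1) r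
    have hinj : Function.Injective ((⇑σ)^[n + 1]) :=
      Function.Injective.iterate σ.injective (n + 1)
    obtain ⟨e, he, hen, hetop⟩ :=
      smul_pol sp im (n + 1) (shift d) b (shift_top d n hdtop)
    have hepol : pol sp im e = op (f * sp.x * sp.ι b) • ν := by
      rw [he, pol_shift, hd, op_mul, op_mul, mul_smul, mul_smul]
    have heval : e (n + 1) = op r • d n := by
      rw [hen, shift_apply, hb]
    have hene : e (n + 1) ≠ 0 := by
      rw [heval]
      have h1 := hr 1 (by rwa [mul_one])
      rwa [mul_one] at h1
    have hfact : ∀ s : R, op (sp.ι s) • (op (f * sp.x * sp.ι b) • ν) =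
        op (sp.ι (b * s)) • (op sp.x • (op f • ν)) := by
      intro s
      rw [op_mul, op_mul, mul_smul, mul_smul,
        ← mul_smul (op (sp.ι s)) (op (sp.ι b)), ← op_mul, ← map_mul]
    refine ⟨f * sp.x * sp.ι b, e, hepol, hene, hetop,
      by rw [heval]; exact Submodule.smul_mem _ _ hdspan, ⟨e, hepol, hene, hetop⟩, ?_⟩
    intro s hs
    by_cases hbs : b * s = 0
    · exfalso
      apply hs
      rw [hfact, hbs, map_zero, op_zero, zero_smul]
    obtain ⟨d1, hd1, hd1n, hd1top⟩ := smul_pol sp im n d (σ (b * s)) hdtop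
    obtain ⟨d2, hd2, -, hd2top⟩ := smul_pol sp im n d (δ (b * s)) hdtop
    refine ⟨shift d1 + d2, ?_, ?_, ?_⟩
    · rw [pol_add, pol_shift, hd1, hd2, hd, hfact]
      conv_rhs => rw [← mul_smul, ← op_mul, sp.comm, op_add, add_smul, op_mul, mul_smul]
    · rw [Finsupp.add_apply, shift_apply, hd2top (n + 1) (by omega), add_zero, hd1n]
      have hσ : (⇑σ)^[n] (σ (b * s)) = r * (⇑σ)^[n + 1] s := by
        rw [← Function.iterate_succ_apply, iter_map_mul, hb]
      rw [hσ]
      refine hr _ fun h0 => hbs (hinj ?_)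
      rw [iter_map_mul, hb, h0, iter_map_zero]
    · intro i hi
      obtain ⟨t, rfl⟩ : ∃ t, i = t + 1 := ⟨i - 1, by omega⟩
      rw [Finsupp.add_apply, shift_apply, hd1top t (by omega), hd2top (t + 1) (by omega),
        add_zero]
end
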